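/- arXiv:1306.1596 — 2 statements merged into one kernel-verified Lean document; each statement's English description precedes it below -/
import Mathlib

section
/- The Kummer lattice J is an even integral lattice: for all u, w ∈ J one has B(u, w) ∈ ℤ, and for all u ∈ J one has B(u, u) ∈ 2ℤ. -/
/-! The pairing `B` is `ℤ`-bilinear, so integrality on `J` follows from integrality on the
generators, and evenness follows from evenness of `B x x` on the generators together with
`B (x + y) (x + y) = B x x + B y y + 2 B x y`. On generators, `B (e a) w = -2 w a ∈ {0, -1, -2}`,
while `B (v α) (v β) = -#(α ∩ β) / 2`. The set `α ∩ β` is a fibre of a group homomorphism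
`𝔽₂⁴ → 𝔽₂²`, hence empty or a coset of a subgroup of index at most `4`; so `4 ∣ #(α ∩ β)`
and `B (v α) (v β)` is even. -/

/-- `I = 𝔽₂⁴`, the 16-element affine space over `𝔽₂`. -/
abbrev I : Type := Fin 4 → ZMod 2

/-- `Q` is the set of all subsets of `I` that arise as zero sets of affine-linear
equations `x ↦ f x + c`. -/
def Q : Set (Set I) :=
  {S | ∃ (f : I →ₗ[ZMod 2] ZMod 2) (c : ZMod 2), S = {x | f x + c = 0}}

/-- `V = ℚ^I`, a 16-dimensional `ℚ`-vector space with standard basis `(e_a)_{a ∈ I}`. -/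
abbrev V : Type := I → ℚ

/-- The standard basis vector `e_a` of `V`. -/
noncomputable def e (a : I) : V := Pi.single a 1

/-- The symmetric bilinear form with `B (e_a) (e_b) = -2` if `a = b` and `0` otherwise. -/
def B (u w : V) : ℚ := ∑ a : I, (-2) * u a * w a

/-- `v_α = (1/2) ∑_{a ∈ α} e_a`. -/
noncomputable def v (α : Set I) : V := α.indicator fun _ => (1 / 2 : ℚ)

/-- The Kummer lattice `J`: the `ℤ`-submodule of `V` generated by the `e_a` together
with all `v_α` for `α ∈ Q`. -/
noncomputable def J : Submodule ℤ V := Submodule.span ℤ (Set.range e ∪ v '' Q)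

theorem AddMonoidHom.card_dvd_card_mul_ncard_preimage {G H : Type*} [AddGroup G] [AddGroup H]
    (φ : G →+ H) (y : H) : Nat.card G ∣ Nat.card H * (φ ⁻¹' {y}).ncard := by
  by_cases hy : y ∈ Set.range φ
  · obtain ⟨x, rfl⟩ := hy
    have hfiber : (φ ⁻¹' {φ x}).ncard = Nat.card φ.ker := by
      rw [← Nat.card_coe_set_eq]
      exact Nat.card_congr (φ.fiberEquivKer x)
    rw [hfiber, ← φ.ker.card_mul_index, AddSubgroup.index_ker, mul_comm]
    exact mul_dvd_mul_right φ.range.card_addSubgroup_dvd_card _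
  · simp [Set.preimage_singleton_eq_empty.2 hy]

namespace LinearMap

variable {R M N : Type*} [CommSemiring R] [AddCommMonoid M] [AddCommMonoid N] [Module R M]
  [Module R N] (f : M →ₗ[R] M →ₗ[R] N) {s : Set M} {P : Submodule R N}

theorem apply_mem_of_mem_span (hs : ∀ x ∈ s, ∀ y ∈ s, f x y ∈ P) {u w : M}
    (hu : u ∈ Submodule.span R s) (hw : w ∈ Submodule.span R s) : f u w ∈ P := by
  have hmap : Submodule.map₂ f (Submodule.span R s) (Submodule.span R s) ≤ P := by
    rw [Submodule.map₂_span_span, Submodule.span_le]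
    rintro _ ⟨x, hx, y, hy, rfl⟩
    exact hs x hx y hy
  exact hmap (Submodule.apply_mem_map₂ f hu hw)

theorem apply_self_mem_of_mem_span (hs : ∀ x ∈ s, f x x ∈ P)
    (hcross : ∀ x ∈ Submodule.span R s, ∀ y ∈ Submodule.span R s, f x y + f y x ∈ P) {u : M}
    (hu : u ∈ Submodule.span R s) : f u u ∈ P := by
  induction hu using Submodule.span_induction with
  | mem x hx => exact hs x hx
  | zero => simp
  | add x y hx hy ihx ihy =>
    have hsplit : f (x + y) (x + y) = f x x + f y y + (f x y + f y x) := by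
      simp only [map_add, add_apply]; abel
    rw [hsplit]
    exact P.add_mem (P.add_mem ihx ihy) (hcross x hx y hy)
  | smul r x _ ih =>
    rw [map_smul, map_smul, smul_apply]
    exact P.smul_mem r (P.smul_mem r ih)

end LinearMap

lemma four_dvd_ncard_inter_of_mem_Q {α β : Set I} (hα : α ∈ Q) (hβ : β ∈ Q) :
    4 ∣ (α ∩ β).ncard := by
  obtain ⟨f, c, rfl⟩ := hα
  obtain ⟨g, d, rfl⟩ := hβ
  have hfiber : {x | f x + c = 0} ∩ {x | g x + d = 0}
      = (f.prod g).toAddMonoidHom ⁻¹' {(-c, -d)} := by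
    ext x
    simp [add_eq_zero_iff_eq_neg, Prod.ext_iff]
  have hdvd := (f.prod g).toAddMonoidHom.card_dvd_card_mul_ncard_preimage (-c, -d)
  rw [← hfiber] at hdvd
  simp only [Nat.card_eq_fintype_card, Fintype.card_pi, ZMod.card, Finset.prod_const,
    Finset.card_univ, Fintype.card_fin, Nat.reducePow, IsAddKleinFour.card_four'] at hdvd
  omega

noncomputable def Bℤ : V →ₗ[ℤ] V →ₗ[ℤ] ℚ :=
  LinearMap.mk₂ ℤ B
    (fun u u' w => by
      simp only [B, Pi.add_apply, ← Finset.sum_add_distrib]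
      exact Finset.sum_congr rfl fun _ _ => by ring)
    (fun n u w => by
      simp only [B, Pi.smul_apply, zsmul_eq_mul, Finset.mul_sum]
      exact Finset.sum_congr rfl fun _ _ => by ring)
    (fun u w w' => by
      simp only [B, Pi.add_apply, ← Finset.sum_add_distrib]
      exact Finset.sum_congr rfl fun _ _ => by ring)
    (fun n u w => by
      simp only [B, Pi.smul_apply, zsmul_eq_mul, Finset.mul_sum]
      exact Finset.sum_congr rfl fun _ _ => by ring)

@[simp]
lemma Bℤ_apply (u w : V) : Bℤ u w = B u w := rfl

lemma B_comm (u w : V) : B u w = B w u :=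
  Finset.sum_congr rfl fun _ _ => by ring

lemma B_e_left (a : I) (w : V) : B (e a) w = -2 * w a := by
  simp [B, e, Pi.single_apply]

lemma B_v_v (α β : Set I) : B (v α) (v β) = -((α ∩ β).ncard : ℚ) / 2 := by
  classical
  have hterm : ∀ a, -2 * v α a * v β a = (α ∩ β).indicator (fun _ => -1 / 2) a := by
    intro a
    by_cases ha : a ∈ α <;> by_cases hb : a ∈ β <;> norm_num [v, ha, hb]
  have hsum := Finset.sum_indicator_subset (fun _ => (-1 / 2 : ℚ))
    (Finset.subset_univ (α ∩ β).toFinset)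
  rw [Set.coe_toFinset] at hsum
  rw [B, Finset.sum_congr rfl fun a _ => hterm a, hsum, Finset.sum_const,
    Set.ncard_eq_toFinset_card', nsmul_eq_mul]
  ring

lemma exists_int_eq_two_mul_apply {x : V} (hx : x ∈ Set.range e ∪ v '' Q) (a : I) :
    ∃ n : ℤ, 2 * x a = n := by
  classical
  rcases hx with ⟨b, rfl⟩ | ⟨β, -, rfl⟩
  · exact ⟨if a = b then 2 else 0, by by_cases h : a = b <;> simp [e, h]⟩
  · exact ⟨if a ∈ β then 1 else 0, by by_cases h : a ∈ β <;> simp [v, h]⟩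

lemma exists_int_eq_B_of_mem_Q {α β : Set I} (hα : α ∈ Q) (hβ : β ∈ Q) :
    ∃ n : ℤ, B (v α) (v β) = 2 * n := by
  obtain ⟨k, hk⟩ := four_dvd_ncard_inter_of_mem_Q hα hβ
  exact ⟨-k, by rw [B_v_v, hk]; push_cast; ring⟩

lemma exists_int_eq_B_of_mem_generators {x y : V} (hx : x ∈ Set.range e ∪ v '' Q)
    (hy : y ∈ Set.range e ∪ v '' Q) : ∃ n : ℤ, B x y = n := by
  rcases hx with ⟨a, rfl⟩ | ⟨α, hα, rfl⟩
  · obtain ⟨n, hn⟩ := exists_int_eq_two_mul_apply hy a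
    exact ⟨-n, by rw [B_e_left, Int.cast_neg, ← hn]; ring⟩
  rcases hy with ⟨b, rfl⟩ | ⟨β, hβ, rfl⟩
  · obtain ⟨n, hn⟩ := exists_int_eq_two_mul_apply (Or.inr ⟨α, hα, rfl⟩) b
    exact ⟨-n, by rw [B_comm, B_e_left, Int.cast_neg, ← hn]; ring⟩
  · obtain ⟨n, hn⟩ := exists_int_eq_B_of_mem_Q hα hβ
    exact ⟨2 * n, by rw [hn]; push_cast; ring⟩

lemma exists_int_eq_B_self_of_mem_generators {x : V} (hx : x ∈ Set.range e ∪ v '' Q) :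
    ∃ n : ℤ, B x x = 2 * n := by
  rcases hx with ⟨a, rfl⟩ | ⟨α, hα, rfl⟩
  · exact ⟨-1, by rw [B_e_left]; simp [e]⟩
  · exact exists_int_eq_B_of_mem_Q hα hα

lemma mem_zspan_singleton_iff {q r : ℚ} : q ∈ ℤ ∙ r ↔ ∃ n : ℤ, q = r * n := by
  simp only [Submodule.mem_span_singleton, zsmul_eq_mul, eq_comm, mul_comm r]

lemma exists_int_eq_B_of_mem_J {u w : V} (hu : u ∈ J) (hw : w ∈ J) : ∃ n : ℤ, B u w = n := by
  have hgen : ∀ x ∈ Set.range e ∪ v '' Q, ∀ y ∈ Set.range e ∪ v '' Q, Bℤ x y ∈ ℤ ∙ (1 : ℚ) :=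
    fun x hx y hy => mem_zspan_singleton_iff.2 <| by
      simpa using exists_int_eq_B_of_mem_generators hx hy
  simpa using mem_zspan_singleton_iff.1 (Bℤ.apply_mem_of_mem_span hgen hu hw)

lemma exists_int_eq_B_self_of_mem_J {u : V} (hu : u ∈ J) : ∃ n : ℤ, B u u = 2 * n := by
  have hgen : ∀ x ∈ Set.range e ∪ v '' Q, Bℤ x x ∈ ℤ ∙ (2 : ℚ) :=
    fun x hx => mem_zspan_singleton_iff.2 (exists_int_eq_B_self_of_mem_generators hx)
  have hcross : ∀ x ∈ J, ∀ y ∈ J, Bℤ x y + Bℤ y x ∈ ℤ ∙ (2 : ℚ) := by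
    intro x hx y hy
    obtain ⟨n, hn⟩ := exists_int_eq_B_of_mem_J hx hy
    exact mem_zspan_singleton_iff.2 ⟨n, by rw [Bℤ_apply, Bℤ_apply, B_comm y x, hn]; ring⟩
  exact mem_zspan_singleton_iff.1 (Bℤ.apply_self_mem_of_mem_span hgen hcross hu)

/-- The Kummer lattice `J` is an even integral lattice: for all
`u, w ∈ J` one has `B u w ∈ ℤ`, and for all `u ∈ J` one has `B u u ∈ 2ℤ`. -/
theorem stmt5 :
    (∀ u ∈ J, ∀ w ∈ J, ∃ n : ℤ, B u w = (n : ℚ)) ∧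
    (∀ u ∈ J, ∃ n : ℤ, B u u = (2 * n : ℤ)) := by
  refine ⟨fun u hu w hw => exists_int_eq_B_of_mem_J hu hw, fun u hu => ?_⟩
  obtain ⟨n, hn⟩ := exists_int_eq_B_self_of_mem_J hu
  exact ⟨n, by exact_mod_cast hn⟩
end

section
/- The quotient J/M of the Kummer lattice J by the sublattice M is isomorphic as an abelian group to (ℤ/2ℤ)⁵; in particular M has index 2⁵ = 32 in J. -/
/-- `M` is the `ℤ`-span of the standard basis vectors `e_a`. -/
noncomputable def M : Submodule ℤ V := Submodule.span ℤ (Set.range e)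

/-
Every element of `J` is `n / 2` for a unique `n : I → ℤ` (for the generators, `n = 2 𝟙_{a}` and
`n = 𝟙_α`). Reducing `n` mod 2 gives a `ℤ`-linear map `J → (I → 𝔽₂)` whose kernel is `M` (the
vectors with `n` even) and whose image is the set of indicators of the sets in `Q`. Over `𝔽₂` the
indicator of `{f + c = 0}` is the affine function `f + c + 1`, so the image is the space of affine
functions on `𝔽₂⁴`, which is isomorphic to `(𝔽₂⁴)^* × 𝔽₂` and hence has dimension 5.
-/

section AffineFunctions

variable (K W : Type*) [Field K] [AddCommGroup W] [Module K W]

def affineFunctions : Submodule K (W → K) :=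
  LinearMap.range ((LinearMap.ltoFun K W K K).coprod (LinearMap.pi fun _ => LinearMap.id))

variable {K W}

theorem mem_affineFunctions {g : W → K} :
    g ∈ affineFunctions K W ↔ ∃ (f : W →ₗ[K] K) (c : K), (fun x => f x + c) = g := by
  simp [affineFunctions, funext_iff]

theorem finrank_affineFunctions [FiniteDimensional K W] :
    Module.finrank K (affineFunctions K W) = Module.finrank K W + 1 := by
  rw [affineFunctions, LinearMap.finrank_range_of_inj]
  · simp
  · rintro ⟨f, c⟩ ⟨f', c'⟩ h
    have hc : c = c' := by simpa using congrFun h 0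
    subst hc
    simp only [LinearMap.coprod_apply, add_left_inj] at h
    simp only [Prod.mk.injEq, and_true]
    exact LinearMap.ext (congrFun h)

end AffineFunctions

theorem Set.indicator_setOf_eq_zero_eq_one_add {X : Type*} (g : X → ZMod 2) :
    {x | g x = 0}.indicator 1 = 1 + g := by
  funext x
  simp only [Set.indicator_apply, Set.mem_ofPred_eq, Pi.one_apply, Pi.add_apply]
  generalize g x = y
  fin_cases y <;> decide

section HalfIntegerVectors

variable {ι : Type*}

noncomputable def intVec : (ι → ℤ) →ₗ[ℤ] (ι → ℚ) := (Algebra.linearMap ℤ ℚ).compLeft ι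

noncomputable def halfVec : (ι → ℤ) →ₗ[ℤ] (ι → ℚ) := (2⁻¹ : ℚ) • intVec

def modTwo : (ι → ℤ) →ₗ[ℤ] (ι → ZMod 2) := (Int.castAddHom (ZMod 2)).toIntLinearMap.compLeft ι

@[simp] theorem intVec_apply (n : ι → ℤ) (a : ι) : intVec n a = n a := rfl

@[simp] theorem halfVec_apply (n : ι → ℤ) (a : ι) : halfVec n a = n a / 2 := by
  simp [halfVec, div_eq_inv_mul]

@[simp] theorem modTwo_apply (n : ι → ℤ) (a : ι) : modTwo n a = n a := rfl

theorem halfVec_injective : Function.Injective (halfVec : (ι → ℤ) →ₗ[ℤ] (ι → ℚ)) := by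
  intro n m h
  funext a
  simpa using congrFun h a

theorem span_range_single_one_eq_range_intVec [Finite ι] [DecidableEq ι] :
    Submodule.span ℤ (Set.range fun a => (Pi.single a 1 : ι → ℚ)) = LinearMap.range intVec := by
  rw [LinearMap.range_eq_map, ← (Pi.basisFun ℤ ι).span_eq, Submodule.map_span, ← Set.range_comp]
  congr 2
  funext a b
  simp [Pi.single_apply, apply_ite]

theorem map_halfVec_ker_modTwo :
    (LinearMap.ker modTwo).map halfVec = LinearMap.range (intVec : (ι → ℤ) →ₗ[ℤ] (ι → ℚ)) := by
  ext x
  simp only [Submodule.mem_map, LinearMap.mem_ker, LinearMap.mem_range]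
  constructor
  · rintro ⟨n, hn, rfl⟩
    have : ∀ a, ∃ m : ℤ, n a = 2 * m := fun a =>
      (ZMod.intCast_zmod_eq_zero_iff_dvd _ 2).1 (congrFun hn a)
    choose m hm using this
    exact ⟨m, funext fun a => by simp [hm]⟩
  · rintro ⟨m, rfl⟩
    refine ⟨2 • m, funext fun a => ?_, funext fun a => by simp⟩
    simp [(ZMod.intCast_zmod_eq_zero_iff_dvd _ 2).2]

theorem modTwo_single_two [DecidableEq ι] (a : ι) : modTwo (Pi.single a 2 : ι → ℤ) = 0 := by
  funext b
  by_cases h : b = a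
  · subst h
    simp only [modTwo_apply, Pi.single_eq_same, Pi.zero_apply]
    rfl
  · simp [h]

theorem modTwo_indicator_one (s : Set ι) : modTwo (s.indicator (1 : ι → ℤ)) = s.indicator 1 := by
  funext a
  by_cases h : a ∈ s <;> simp [h]

end HalfIntegerVectors

theorem M_eq_range_intVec : M = LinearMap.range intVec :=
  span_range_single_one_eq_range_intVec

theorem image_indicator_one_Q :
    (fun α : Set I => α.indicator (1 : I → ZMod 2)) '' Q = affineFunctions (ZMod 2) I := by
  ext g
  simp only [Set.mem_image, SetLike.mem_coe, mem_affineFunctions, Q]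
  constructor
  · rintro ⟨_, ⟨f, c, rfl⟩, rfl⟩
    refine ⟨f, c + 1, ?_⟩
    rw [Set.indicator_setOf_eq_zero_eq_one_add]
    funext x
    simp only [Pi.add_apply, Pi.one_apply]
    ring
  · rintro ⟨f, c, rfl⟩
    refine ⟨_, ⟨f, c + 1, rfl⟩, ?_⟩
    rw [Set.indicator_setOf_eq_zero_eq_one_add]
    funext x
    simp only [Pi.add_apply, Pi.one_apply]
    linear_combination CharTwo.add_self_eq_zero (1 : ZMod 2)

theorem halfVec_single_two (a : I) : halfVec (Pi.single a 2) = e a := by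
  funext b
  by_cases h : b = a <;> simp [e, h]

theorem halfVec_indicator_one (α : Set I) : halfVec (α.indicator 1) = v α := by
  funext b
  by_cases h : b ∈ α <;> simp [v, h]

noncomputable def halfAffine : Submodule ℤ V :=
  (((affineFunctions (ZMod 2) I).restrictScalars ℤ).comap modTwo).map halfVec

theorem J_le_halfAffine : J ≤ halfAffine := by
  rw [J, Submodule.span_le]
  rintro x (⟨a, rfl⟩ | ⟨α, hα, rfl⟩)
  · refine ⟨Pi.single a 2, ?_, halfVec_single_two a⟩
    rw [SetLike.mem_coe, Submodule.mem_comap, modTwo_single_two]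
    exact zero_mem _
  · refine ⟨α.indicator 1, ?_, halfVec_indicator_one α⟩
    rw [SetLike.mem_coe, Submodule.mem_comap, Submodule.restrictScalars_mem, modTwo_indicator_one,
      ← SetLike.mem_coe, ← image_indicator_one_Q]
    exact ⟨α, hα, rfl⟩

theorem J_le_range_halfVec : J ≤ LinearMap.range halfVec :=
  J_le_halfAffine.trans LinearMap.map_le_range

noncomputable def parity : J →ₗ[ℤ] (I → ZMod 2) :=
  modTwo ∘ₗ (LinearEquiv.ofInjective halfVec halfVec_injective).symm.toLinearMap ∘ₗ
    Submodule.inclusion J_le_range_halfVec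

theorem parity_eq_modTwo {x : J} {n : I → ℤ} (h : halfVec n = x) : parity x = modTwo n := by
  simp only [parity, LinearMap.comp_apply, LinearEquiv.coe_coe]
  congr 1
  rw [LinearEquiv.symm_apply_eq]
  exact Subtype.ext (by simpa using h.symm)

theorem ker_parity : LinearMap.ker parity = M.comap J.subtype := by
  ext x
  obtain ⟨n, hn⟩ := J_le_range_halfVec x.2
  rw [LinearMap.mem_ker, parity_eq_modTwo hn, Submodule.mem_comap, Submodule.subtype_apply, ← hn,
    M_eq_range_intVec, ← map_halfVec_ker_modTwo,
    ← Submodule.mem_comap, Submodule.comap_map_eq_of_injective halfVec_injective,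
    LinearMap.mem_ker]

theorem range_parity :
    LinearMap.range parity = (affineFunctions (ZMod 2) I).restrictScalars ℤ := by
  apply le_antisymm
  · rintro _ ⟨x, rfl⟩
    obtain ⟨n, hn, hnx⟩ := J_le_halfAffine x.2
    rw [parity_eq_modTwo hnx]
    exact hn
  · intro g hg
    rw [Submodule.restrictScalars_mem, ← SetLike.mem_coe, ← image_indicator_one_Q] at hg
    obtain ⟨α, hα, rfl⟩ := hg
    have hv : v α ∈ J := Submodule.subset_span (Or.inr ⟨α, hα, rfl⟩)
    exact ⟨⟨v α, hv⟩, by rw [parity_eq_modTwo (halfVec_indicator_one α), modTwo_indicator_one]⟩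

/-- The quotient `J/M` of the Kummer lattice `J` by the sublattice `M` is
isomorphic as an abelian group to `(ℤ/2ℤ)⁵`; in particular `M` has index `2⁵ = 32`
in `J`. -/
theorem stmt6 :
    M ≤ J ∧
    Nonempty ((↥J ⧸ M.comap J.subtype) ≃+ (Fin 5 → ZMod 2)) ∧
    Nat.card (↥J ⧸ M.comap J.subtype) = 32 := by
  have quotEquiv : (↥J ⧸ M.comap J.subtype) ≃+ (Fin 5 → ZMod 2) :=
    ((Submodule.quotEquivOfEq _ _ ker_parity.symm).trans
      (parity.quotKerEquivRange.trans (LinearEquiv.ofEq _ _ range_parity))).toAddEquiv.trans <|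
    (Submodule.restrictScalarsEquiv ℤ (ZMod 2) _ _).toAddEquiv.trans
    (LinearEquiv.ofFinrankEq _ _ (by rw [finrank_affineFunctions]; simp)).toAddEquiv
  refine ⟨Submodule.span_mono Set.subset_union_left, ⟨quotEquiv⟩, ?_⟩
  rw [Nat.card_congr quotEquiv.toEquiv]
  simp
end
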